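/- Let β be a density matrix on S⊗R₁ and γ a density matrix on S⊗R₂, viewed as prior beliefs about system S. Then β and γ are equivalent beliefs (i.e., they induce the same retrodiction map for all channels) if and only if for every complex matrix F on S one has Tr_{R₁}[√β (F⊗1_{R₁}) √β] = Tr_{R₂}[√γ (F⊗1_{R₂}) √γ]. -/

import Mathlib

open Matrix
open scoped Kronecker ComplexOrder


/-- The PSD square root, as `Matrix.PosSemidef.sqrt` was defined in Mathlib of December 2024. -/
noncomputable def Matrix.PosSemidef.sqrt {n 𝕜 : Type*} [Fintype n] [RCLike 𝕜] [DecidableEq n]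
    {A : Matrix n n 𝕜} (hA : A.PosSemidef) : Matrix n n 𝕜 :=
  hA.1.eigenvectorUnitary.1 * diagonal ((↑) ∘ (√·) ∘ hA.1.eigenvalues) *
    (star hA.1.eigenvectorUnitary : Matrix n n 𝕜)

open Classical in
/-- The positive semidefinite square root of a matrix (zero if not PSD). -/
noncomputable def msqrt {n : Type*} [Fintype n] [DecidableEq n] (A : Matrix n n ℂ) :
    Matrix n n ℂ :=
  if h : A.PosSemidef then h.sqrt else 0

/-- `A^{-1/2}`: the (nonsingular) inverse of the PSD square root. -/
noncomputable def invsqrt {n : Type*} [Fintype n] [DecidableEq n] (A : Matrix n n ℂ) :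
    Matrix n n ℂ :=
  (msqrt A)⁻¹

/-- Partial trace over the second factor `R`. -/
noncomputable def ptraceR {S R : Type*} [Fintype R] (M : Matrix (S × R) (S × R) ℂ) : Matrix S S ℂ :=
  Matrix.of fun s s' => ∑ r, M (s, r) (s', r)

/-- A density matrix: positive semidefinite with unit trace. -/
def IsDensity {n : Type*} [Fintype n] (A : Matrix n n ℂ) : Prop :=
  A.PosSemidef ∧ A.trace = 1

/-- The Choi matrix of a linear map between matrix algebras. -/
def choi {S T : Type*} [Fintype S] [DecidableEq S]
    (E : Matrix S S ℂ →ₗ[ℂ] Matrix T T ℂ) : Matrix (S × T) (S × T) ℂ :=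
  Matrix.of fun p q => E (Matrix.single p.1 q.1 1) p.2 q.2

/-- Completely positive trace-preserving map. -/
def IsCPTP {S T : Type*} [Fintype S] [DecidableEq S] [Fintype T]
    (E : Matrix S S ℂ →ₗ[ℂ] Matrix T T ℂ) : Prop :=
  (∀ X, (E X).trace = X.trace) ∧ (choi E).PosSemidef

/-- The Hilbert-Schmidt adjoint `E†`, satisfying `Tr[E(X)† Y] = Tr[X† E†(Y)]`. -/
noncomputable def adjMap {S T : Type*} [Fintype S] [DecidableEq S] [Fintype T]
    (E : Matrix S S ℂ →ₗ[ℂ] Matrix T T ℂ) (Y : Matrix T T ℂ) : Matrix S S ℂ :=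
  Matrix.of fun i j => ((E (Matrix.single i j 1))ᴴ * Y).trace

/-- The original Petz map `R^{E,βS}(σ) = √βS E†(E(βS)^{-1/2} σ E(βS)^{-1/2}) √βS`. -/
noncomputable def petz {S T : Type*} [Fintype S] [DecidableEq S] [Fintype T] [DecidableEq T]
    (E : Matrix S S ℂ →ₗ[ℂ] Matrix T T ℂ) (βS : Matrix S S ℂ) (σ : Matrix T T ℂ) :
    Matrix S S ℂ :=
  msqrt βS * adjMap E (invsqrt (E βS) * σ * invsqrt (E βS)) * msqrt βS

/-- The prior-extended Petz map `R^{E⊗Tr,β}`. -/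
noncomputable def petzExt {S R T : Type*} [Fintype S] [DecidableEq S]
    [Fintype R] [DecidableEq R] [Fintype T] [DecidableEq T]
    (E : Matrix S S ℂ →ₗ[ℂ] Matrix T T ℂ) (β : Matrix (S × R) (S × R) ℂ)
    (σ : Matrix T T ℂ) : Matrix (S × R) (S × R) ℂ :=
  msqrt β *
    (adjMap E (invsqrt (E (ptraceR β)) * σ * invsqrt (E (ptraceR β))) ⊗ₖ (1 : Matrix R R ℂ)) *
    msqrt β

/-- The retrodiction map `R_ext^{E,β} = Tr_R ∘ R^{E⊗Tr,β}`. -/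
noncomputable def retroExt {S R T : Type*} [Fintype S] [DecidableEq S]
    [Fintype R] [DecidableEq R] [Fintype T] [DecidableEq T]
    (E : Matrix S S ℂ →ₗ[ℂ] Matrix T T ℂ) (β : Matrix (S × R) (S × R) ℂ)
    (σ : Matrix T T ℂ) : Matrix S S ℂ :=
  ptraceR (petzExt E β σ)

/-- Two beliefs are equivalent if they induce the same retrodiction map for all channels. -/
def EquivBeliefs {S R₁ R₂ : Type*} [Fintype S] [DecidableEq S]
    [Fintype R₁] [DecidableEq R₁] [Fintype R₂] [DecidableEq R₂]
    (β : Matrix (S × R₁) (S × R₁) ℂ) (γ : Matrix (S × R₂) (S × R₂) ℂ) : Prop :=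
  ∀ (T : Type) (_ : Fintype T) (_ : DecidableEq T)
    (E : Matrix S S ℂ →ₗ[ℂ] Matrix T T ℂ),
    IsCPTP E → (E (ptraceR β)).PosDef → (E (ptraceR γ)).PosDef →
    ∀ σ : Matrix T T ℂ, retroExt E β σ = retroExt E γ σ

/-!
Both conditions force equal marginals `β_S = γ_S`: take `F = 1`, resp. the completely depolarizing
channel, which sends every density matrix to the maximally mixed state. Once the marginals agree,
`R_ext^{E,β}(σ) = Tr_R[√β (E†(Y) ⊗ 1) √β]` with `Y = E(β_S)^{-1/2} σ E(β_S)^{-1/2}`, and `Y` runs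
over all matrices as `σ` does. Equivalence thus says that the two sandwiches agree on the range of
every adjoint `E†`, and the half-depolarizing channel `X ↦ X/2 + Tr X · 1/(2d)` has positive
definite outputs on states and a surjective adjoint.
-/

open scoped MatrixOrder

section SquareRoot

variable {n : Type*} [Fintype n] [DecidableEq n] {A : Matrix n n ℂ}

theorem Matrix.PosSemidef.sqrt_eq_cfcSqrt (hA : A.PosSemidef) : hA.sqrt = CFC.sqrt A := by
  rw [CFC.sqrt_eq_real_sqrt A hA.nonneg, cfcₙ_eq_cfc, hA.1.cfc_eq]
  rfl

theorem msqrt_eq_cfcSqrt (hA : A.PosSemidef) : msqrt A = CFC.sqrt A := by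
  rw [msqrt, dif_pos hA, hA.sqrt_eq_cfcSqrt]

theorem msqrt_mul_self (hA : A.PosSemidef) : msqrt A * msqrt A = A := by
  rw [msqrt_eq_cfcSqrt hA, CFC.sqrt_mul_sqrt_self A hA.nonneg]

theorem isUnit_msqrt (hA : A.PosDef) : IsUnit (msqrt A) := by
  rw [msqrt_eq_cfcSqrt hA.posSemidef, CFC.isUnit_sqrt_iff A hA.posSemidef.nonneg]
  exact hA.isUnit

theorem invsqrt_mul_mul_invsqrt (hA : A.PosDef) (X : Matrix n n ℂ) :
    invsqrt A * (msqrt A * X * msqrt A) * invsqrt A = X := by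
  have hdet := (isUnit_iff_isUnit_det _).mp (isUnit_msqrt hA)
  rw [invsqrt, ← mul_assoc, ← mul_assoc, nonsing_inv_mul _ hdet, one_mul, mul_assoc,
    mul_nonsing_inv _ hdet, mul_one]

end SquareRoot

section PartialTrace

variable {S R : Type*} [Fintype R]

theorem trace_ptraceR [Fintype S] (M : Matrix (S × R) (S × R) ℂ) :
    (ptraceR M).trace = M.trace := by
  simp [Matrix.trace, ptraceR, Fintype.sum_prod_type]

theorem ptraceR_eq_sum_submatrix (M : Matrix (S × R) (S × R) ℂ) :
    ptraceR M = ∑ r, M.submatrix (·, r) (·, r) := by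
  ext s s'
  simp [ptraceR, Matrix.sum_apply]

theorem Matrix.PosSemidef.ptraceR [Fintype S] {M : Matrix (S × R) (S × R) ℂ} (hM : M.PosSemidef) :
    (ptraceR M).PosSemidef := by
  rw [ptraceR_eq_sum_submatrix]
  exact posSemidef_sum _ fun r _ => hM.submatrix _

theorem IsDensity.ptraceR [Fintype S] {M : Matrix (S × R) (S × R) ℂ} (hM : IsDensity M) :
    IsDensity (ptraceR M) :=
  ⟨hM.1.ptraceR, (trace_ptraceR M).trans hM.2⟩

end PartialTrace

theorem Matrix.trace_submatrix_equiv {m n R : Type*} [Fintype m] [Fintype n] [AddCommMonoid R]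
    (e : m ≃ n) (X : Matrix n n R) : (X.submatrix e e).trace = X.trace :=
  e.sum_comp fun i => X i i

theorem Matrix.trace_single {n R : Type*} [Fintype n] [DecidableEq n] [AddCommMonoid R]
    (i j : n) (c : R) : (single i j c).trace = if i = j then c else 0 := by
  split_ifs with h
  · exact h ▸ trace_single_eq_same i c
  · exact trace_single_eq_of_ne i j c h

section Channels

variable {S T : Type*} [Fintype S] [Fintype T] [DecidableEq T]

-- The output is relabelled along `e` because `EquivBeliefs` only tests channels into `Type`.
noncomputable def depolarizing (e : S ≃ T) (p : ℝ) : Matrix S S ℂ →ₗ[ℂ] Matrix T T ℂ :=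
  ((1 - p : ℝ) : ℂ) • (reindexLinearEquiv ℂ ℂ e e).toLinearMap +
    ((p / Fintype.card T : ℝ) : ℂ) • (traceLinearMap S ℂ ℂ).smulRight 1

variable (e : S ≃ T) (p : ℝ)

theorem depolarizing_apply (X : Matrix S S ℂ) :
    depolarizing e p X = ((1 - p : ℝ) : ℂ) • X.submatrix e.symm e.symm +
      (((p / Fintype.card T : ℝ) : ℂ) * X.trace) • 1 := by
  simp [depolarizing, mul_smul]

theorem trace_depolarizing (X : Matrix S S ℂ) : (depolarizing e p X).trace = X.trace := by
  rcases isEmpty_or_nonempty S with hS | hS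
  · have : IsEmpty T := e.symm.isEmpty
    simp [Matrix.trace]
  have : Nonempty T := e.symm.nonempty
  have hcard : (Fintype.card T : ℂ) ≠ 0 := Nat.cast_ne_zero.mpr Fintype.card_ne_zero
  simp only [depolarizing_apply, trace_add, trace_smul, trace_one, smul_eq_mul,
    trace_submatrix_equiv]
  push_cast
  field_simp
  ring

theorem posDef_depolarizing {ρ : Matrix S S ℂ} (hρ : IsDensity ρ) (hp0 : 0 < p) (hp1 : p ≤ 1) :
    (depolarizing e p ρ).PosDef := by
  have : Nonempty T := by
    refine e.nonempty_congr.mp (not_isEmpty_iff.mp fun hS => ?_)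
    simpa [Matrix.trace] using hρ.2
  rw [depolarizing_apply, hρ.2, mul_one]
  exact PosDef.posSemidef_add ((hρ.1.submatrix _).smul (Complex.zero_le_real.mpr (by linarith)))
    (PosDef.one.smul (Complex.zero_lt_real.mpr (by positivity)))

variable [DecidableEq S]

theorem adjMap_one_of_trace {E : Matrix S S ℂ →ₗ[ℂ] Matrix T T ℂ}
    (hE : ∀ X, (E X).trace = X.trace) : adjMap E 1 = 1 := by
  ext i j
  rw [adjMap, of_apply, Matrix.mul_one, trace_conjTranspose, hE, trace_single, one_apply]
  split_ifs <;> simp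

theorem choi_depolarizing :
    choi (depolarizing e p) = ((1 - p : ℝ) : ℂ) •
        vecMulVec (fun q : S × T => if e q.1 = q.2 then 1 else 0)
          (star fun q : S × T => if e q.1 = q.2 then 1 else 0) +
      ((p / Fintype.card T : ℝ) : ℂ) • 1 := by
  ext ⟨s, t⟩ ⟨s', t'⟩
  simp only [choi, depolarizing_apply, of_apply, Matrix.add_apply, Matrix.smul_apply,
    submatrix_apply, single_apply, trace_single, one_apply, vecMulVec, Pi.star_apply,
    Equiv.eq_symm_apply, Prod.mk.injEq]
  split_ifs <;> simp_all

theorem adjMap_depolarizing (Y : Matrix T T ℂ) :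
    adjMap (depolarizing e p) Y = ((1 - p : ℝ) : ℂ) • Y.submatrix e e +
      (((p / Fintype.card T : ℝ) : ℂ) * Y.trace) • 1 := by
  ext i j
  by_cases hij : i = j <;>
    simp [adjMap, depolarizing_apply, add_mul, trace_single, one_apply, trace_single_mul, hij]

theorem isCPTP_depolarizing (hp0 : 0 ≤ p) (hp1 : p ≤ 1) : IsCPTP (depolarizing e p) := by
  refine ⟨trace_depolarizing e p, ?_⟩
  rw [choi_depolarizing]
  exact ((posSemidef_vecMulVec_self_star _).smul (Complex.zero_le_real.mpr (by linarith))).add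
    (PosSemidef.one.smul (Complex.zero_le_real.mpr (by positivity)))

theorem adjMap_depolarizing_surjective (hp : p ≠ 1) :
    Function.Surjective (adjMap (depolarizing e p)) := by
  intro F
  rcases isEmpty_or_nonempty S with _ | _
  · exact ⟨0, Subsingleton.elim _ _⟩
  have hcard : (Fintype.card T : ℂ) ≠ 0 :=
    Nat.cast_ne_zero.mpr (Fintype.card_congr e ▸ Fintype.card_ne_zero)
  have hp' : ((1 - p : ℝ) : ℂ) ≠ 0 := by exact_mod_cast sub_ne_zero.mpr hp.symm
  set c := ((p / Fintype.card T : ℝ) : ℂ) * F.trace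
  refine ⟨(((1 - p : ℝ) : ℂ)⁻¹ • (F - c • 1)).submatrix e.symm e.symm, ?_⟩
  have htr : ((((1 - p : ℝ) : ℂ)⁻¹ • (F - c • 1)).submatrix e.symm e.symm).trace = F.trace := by
    simp only [trace_submatrix_equiv, trace_smul, trace_sub, trace_one, Fintype.card_congr e, c,
      smul_eq_mul]
    push_cast at hp' ⊢
    field_simp
  rw [adjMap_depolarizing, htr, submatrix_submatrix, e.symm_comp_self, submatrix_id_id, smul_smul,
    mul_inv_cancel₀ hp', one_smul, sub_add_cancel]

end Channels

section Retrodiction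

variable {S R : Type*} [Fintype S] [DecidableEq S] [Fintype R] [DecidableEq R]

noncomputable def sqrtSandwich (β : Matrix (S × R) (S × R) ℂ) (F : Matrix S S ℂ) :
    Matrix S S ℂ :=
  ptraceR (msqrt β * (F ⊗ₖ (1 : Matrix R R ℂ)) * msqrt β)

theorem sqrtSandwich_one {β : Matrix (S × R) (S × R) ℂ} (hβ : β.PosSemidef) :
    sqrtSandwich β 1 = ptraceR β := by
  rw [sqrtSandwich, one_kronecker_one, mul_one, msqrt_mul_self hβ]

variable {T : Type*} [Fintype T] [DecidableEq T]

theorem retroExt_eq_sqrtSandwich (E : Matrix S S ℂ →ₗ[ℂ] Matrix T T ℂ)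
    (β : Matrix (S × R) (S × R) ℂ) (σ : Matrix T T ℂ) :
    retroExt E β σ =
      sqrtSandwich β (adjMap E (invsqrt (E (ptraceR β)) * σ * invsqrt (E (ptraceR β)))) :=
  rfl

theorem retroExt_msqrt_mul_mul_msqrt {E : Matrix S S ℂ →ₗ[ℂ] Matrix T T ℂ}
    {β : Matrix (S × R) (S × R) ℂ} (hβE : (E (ptraceR β)).PosDef) (Y : Matrix T T ℂ) :
    retroExt E β (msqrt (E (ptraceR β)) * Y * msqrt (E (ptraceR β))) =
      sqrtSandwich β (adjMap E Y) := by
  rw [retroExt_eq_sqrtSandwich, invsqrt_mul_mul_invsqrt hβE]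

end Retrodiction

namespace EquivBeliefs

variable {S R₁ R₂ : Type*} [Fintype S] [DecidableEq S] [Fintype R₁] [DecidableEq R₁]
  [Fintype R₂] [DecidableEq R₂] {β : Matrix (S × R₁) (S × R₁) ℂ}
  {γ : Matrix (S × R₂) (S × R₂) ℂ}

theorem sqrtSandwich_adjMap_eq (h : EquivBeliefs β γ) {T : Type} [Fintype T] [DecidableEq T]
    {E : Matrix S S ℂ →ₗ[ℂ] Matrix T T ℂ} (hE : IsCPTP E) (hβE : (E (ptraceR β)).PosDef)
    (hβγ : E (ptraceR β) = E (ptraceR γ)) (Y : Matrix T T ℂ) :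
    sqrtSandwich β (adjMap E Y) = sqrtSandwich γ (adjMap E Y) := by
  have hγE : (E (ptraceR γ)).PosDef := hβγ ▸ hβE
  have := h T ‹_› ‹_› E hE hβE hγE (msqrt (E (ptraceR β)) * Y * msqrt (E (ptraceR β)))
  rwa [retroExt_msqrt_mul_mul_msqrt hβE, hβγ, retroExt_msqrt_mul_mul_msqrt hγE] at this

theorem ptraceR_eq (h : EquivBeliefs β γ) (hβ : IsDensity β) (hγ : IsDensity γ) :
    ptraceR β = ptraceR γ := by
  let e := Fintype.equivFin S
  have hβγ : depolarizing e 1 (ptraceR β) = depolarizing e 1 (ptraceR γ) := by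
    simp [depolarizing_apply, trace_ptraceR, hβ.2, hγ.2]
  have := h.sqrtSandwich_adjMap_eq (isCPTP_depolarizing e 1 zero_le_one le_rfl)
    (posDef_depolarizing e 1 hβ.ptraceR one_pos le_rfl) hβγ 1
  rwa [adjMap_one_of_trace (trace_depolarizing e 1), sqrtSandwich_one hβ.1,
    sqrtSandwich_one hγ.1] at this

end EquivBeliefs

/-- Two beliefs are equivalent iff
`Tr_{R₁}[√β (F⊗1) √β] = Tr_{R₂}[√γ (F⊗1) √γ]` for every matrix `F` on `S`. -/
theorem beliefs_equiv_iff_sqrt_sandwich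
    {S R₁ R₂ : Type*} [Fintype S] [DecidableEq S]
    [Fintype R₁] [DecidableEq R₁] [Fintype R₂] [DecidableEq R₂]
    (β : Matrix (S × R₁) (S × R₁) ℂ) (γ : Matrix (S × R₂) (S × R₂) ℂ)
    (hβ : IsDensity β) (hγ : IsDensity γ) :
    EquivBeliefs β γ ↔
      ∀ F : Matrix S S ℂ,
        ptraceR (msqrt β * (F ⊗ₖ (1 : Matrix R₁ R₁ ℂ)) * msqrt β) =
          ptraceR (msqrt γ * (F ⊗ₖ (1 : Matrix R₂ R₂ ℂ)) * msqrt γ) := by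
  constructor
  · intro h F
    let e := Fintype.equivFin S
    have hβγ := congrArg (depolarizing e (1 / 2)) (h.ptraceR_eq hβ hγ)
    obtain ⟨Y, rfl⟩ := adjMap_depolarizing_surjective e (1 / 2) (by norm_num) F
    exact h.sqrtSandwich_adjMap_eq (isCPTP_depolarizing e _ (by norm_num) (by norm_num))
      (posDef_depolarizing e _ hβ.ptraceR (by norm_num) (by norm_num)) hβγ Y
  · intro h T _ _ E _ _ _ σ
    have hρ : sqrtSandwich β 1 = sqrtSandwich γ 1 := h 1
    rw [sqrtSandwich_one hβ.1, sqrtSandwich_one hγ.1] at hρ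
    rw [retroExt_eq_sqrtSandwich, retroExt_eq_sqrtSandwich, hρ]
    exact h _
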